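/- arXiv:1111.6926 — 3 statements merged into one kernel-verified Lean document; each statement's English description precedes it below -/
import Mathlib

section
/- Let X be a real p×n matrix partitioned as X = [Y; Z], where Y consists of the first k rows of X, suppose Y·Yᵀ is invertible, and let P = Yᵀ·(Y·Yᵀ)⁻¹·Y. If rank(Y) = rank(X), then X·P = X, and consequently (1/n)·X·P·Xᵀ = (1/n)·X·Xᵀ; i.e., the Nyström covariance estimator coincides with the sample covariance. -/
/-!
Equal ranks force the row space of `Y` to be the whole row space of `X`, so `Z = C·Y` for some
matrix `C`. Since `Y·P = Y` by the invertibility of `Y·Yᵀ`, also `Z·P = C·Y·P = Z`, i.e. `X·P = X`.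
-/

open Matrix

theorem Matrix.exists_eq_mul_of_rank_eq_rank_fromRows {K k m n : Type*} [Field K]
    [Fintype k] [Finite m] [Fintype n] {Y : Matrix k n K} {Z : Matrix m n K}
    (h : Y.rank = (fromRows Y Z).rank) : ∃ C : Matrix m k K, Z = C * Y := by
  have hspan : Submodule.span K (Set.range Y.row) =
      Submodule.span K (Set.range (fromRows Y Z).row) := by
    apply Submodule.eq_of_le_of_finrank_eq
    · exact Submodule.span_mono fun _ ⟨i, hi⟩ => ⟨Sum.inl i, hi⟩
    · rwa [← rank_eq_finrank_span_row, ← rank_eq_finrank_span_row]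
  have hrow (i : m) : Z i ∈ Submodule.span K (Set.range Y.row) :=
    hspan ▸ Submodule.subset_span ⟨Sum.inr i, rfl⟩
  choose C hC using fun i => (Submodule.mem_span_range_iff_exists_fun K).mp (hrow i)
  refine ⟨of C, ?_⟩
  ext i j
  rw [← hC i]
  simp [mul_apply]

theorem Matrix.mul_mul_nonsing_inv_mul_eq_self {R k n : Type*} [CommRing R] [Fintype k]
    [DecidableEq k] [Fintype n] {Y : Matrix k n R} {B : Matrix n k R} (h : IsUnit (Y * B)) :
    Y * (B * (Y * B)⁻¹ * Y) = Y := by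
  rw [← Matrix.mul_assoc, ← Matrix.mul_assoc,
    mul_nonsing_inv _ ((isUnit_iff_isUnit_det _).mp h), Matrix.one_mul]

theorem nystrom_exact_when_full_rank_general (k m n : ℕ)
    (Y : Matrix (Fin k) (Fin n) ℝ) (Z : Matrix (Fin m) (Fin n) ℝ)
    (hY : IsUnit (Y * Yᵀ))
    (hrank : Y.rank = (Matrix.fromRows Y Z).rank) :
    Matrix.fromRows Y Z * (Yᵀ * (Y * Yᵀ)⁻¹ * Y) = Matrix.fromRows Y Z ∧
    (n : ℝ)⁻¹ • (Matrix.fromRows Y Z * (Yᵀ * (Y * Yᵀ)⁻¹ * Y) * (Matrix.fromRows Y Z)ᵀ) =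
      (n : ℝ)⁻¹ • (Matrix.fromRows Y Z * (Matrix.fromRows Y Z)ᵀ) := by
  obtain ⟨C, rfl⟩ := exists_eq_mul_of_rank_eq_rank_fromRows hrank
  have hXP : fromRows Y (C * Y) * (Yᵀ * (Y * Yᵀ)⁻¹ * Y) = fromRows Y (C * Y) := by
    rw [fromRows_mul, Matrix.mul_assoc C, mul_mul_nonsing_inv_mul_eq_self hY]
  exact ⟨hXP, by rw [hXP]⟩

/-- If `rank Y = rank X` where `Y` consists of the first `k` rows of `X`, then
`X·P = X` for the Nyström projection `P = Yᵀ·(Y·Yᵀ)⁻¹·Y`, and the Nyström covariance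
estimator coincides with the sample covariance. -/
theorem nystrom_exact_when_full_rank (k m n : ℕ) (hk : 1 ≤ k)
    (Y : Matrix (Fin k) (Fin n) ℝ) (Z : Matrix (Fin m) (Fin n) ℝ)
    (hY : IsUnit (Y * Yᵀ))
    (hrank : Y.rank = (Matrix.fromRows Y Z).rank) :
    Matrix.fromRows Y Z * (Yᵀ * (Y * Yᵀ)⁻¹ * Y) = Matrix.fromRows Y Z ∧
    (n : ℝ)⁻¹ • (Matrix.fromRows Y Z * (Yᵀ * (Y * Yᵀ)⁻¹ * Y) * (Matrix.fromRows Y Z)ᵀ) =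
      (n : ℝ)⁻¹ • (Matrix.fromRows Y Z * (Matrix.fromRows Y Z)ᵀ) :=
  nystrom_exact_when_full_rank_general k m n Y Z hY hrank
end

section
/- Let X be a real p×n matrix, let P be a real n×n symmetric idempotent matrix, let S = (1/n)·X·Xᵀ be the sample covariance and Σ̂ = (1/n)·X·P·Xᵀ. Then both S and Σ̂ are symmetric positive semidefinite, and for every i = 1,…,p the i-th largest eigenvalue (counted with multiplicity) of Σ̂ is less than or equal to the i-th largest eigenvalue of S; i.e., the Nyström covariance estimator shrinks every eigenvalue of the sample covariance toward zero. -/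
/-! A symmetric idempotent `Q` equals `Q Qᵀ`, so `X Q Xᵀ` is positive semidefinite. Since `P` is
a symmetric idempotent, so is `1 - P`, hence `S - Σ̂ = (1/n)·X·(1 - P)·Xᵀ`
is positive semidefinite. Eigenvalues are monotone in the Loewner order (Weyl): if the `k`-th
smallest eigenvalue `μ` of `Σ̂` exceeded the `k`-th smallest eigenvalue `ν` of `S`, the span of
the eigenvectors of `Σ̂` with eigenvalue `≥ μ` (dimension `≥ p - k`) and the span of those of `S`
with eigenvalue `≤ ν` (dimension `≥ k + 1`) would share a nonzero vector `v`, and then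
`μ‖v‖² ≤ ⟪Σ̂ v, v⟫ ≤ ⟪S v, v⟫ ≤ ν‖v‖² < μ‖v‖²`. -/

open Matrix Finset Module Submodule
open scoped RealInnerProductSpace

namespace Tuple

variable {α : Type*} [LinearOrder α] {p : ℕ} (f : Fin p → α) (k : Fin p)

theorem sub_le_card_filter_apply_sort_le :
    p - (k : ℕ) ≤ #{j | f (sort f k) ≤ f j} := by
  calc p - (k : ℕ) = #(Ici k) := (Fin.card_Ici k).symm
    _ = #((Ici k).image (sort f)) := (card_image_of_injective _ (Equiv.injective _)).symm
    _ ≤ #{j | f (sort f k) ≤ f j} := card_le_card fun j hj => by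
      obtain ⟨k', hk', rfl⟩ := mem_image.1 hj
      simpa using monotone_sort f (mem_Ici.1 hk')

theorem succ_le_card_filter_le_apply_sort :
    (k : ℕ) + 1 ≤ #{j | f j ≤ f (sort f k)} := by
  calc (k : ℕ) + 1 = #(Iic k) := (Fin.card_Iic k).symm
    _ = #((Iic k).image (sort f)) := (card_image_of_injective _ (Equiv.injective _)).symm
    _ ≤ #{j | f j ≤ f (sort f k)} := card_le_card fun j hj => by
      obtain ⟨k', hk', rfl⟩ := mem_image.1 hj
      simpa using monotone_sort f (mem_Iic.1 hk')

end Tuple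

theorem Submodule.exists_mem_inf_ne_zero_of_finrank_lt {K V : Type*} [DivisionRing K]
    [AddCommGroup V] [Module K V] [FiniteDimensional K V] {s t : Submodule K V}
    (h : finrank K V < finrank K s + finrank K t) : ∃ v ∈ s ⊓ t, v ≠ 0 := by
  by_contra! hst
  exact h.not_ge (finrank_add_finrank_le_of_disjoint
    (disjoint_def.2 fun v hs ht => hst v ⟨hs, ht⟩))

namespace OrthonormalBasis

variable {ι E : Type*} [Fintype ι] [NormedAddCommGroup E] [InnerProductSpace ℝ E]
  (b : OrthonormalBasis ι ℝ E)

theorem finrank_span_image (J : Finset ι) : finrank ℝ (span ℝ (b '' J)) = #J := by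
  rw [Set.image_eq_range]
  exact (finrank_span_eq_card (b.orthonormal.linearIndependent.comp _ Subtype.val_injective)).trans
    (by simp)

theorem inner_eq_zero_of_mem_span_image {J : Set ι} {j : ι} (hj : j ∉ J) {v : E}
    (hv : v ∈ span ℝ (b '' J)) : ⟪b j, v⟫ = 0 := by
  refine span_induction ?_ (inner_zero_right _) (fun x y _ _ hx hy => ?_)
    (fun c x _ hx => ?_) hv
  · rintro _ ⟨i, hi, rfl⟩
    exact b.orthonormal.2 fun h => hj (h ▸ hi)
  · rw [inner_add_right, hx, hy, add_zero]
  · rw [inner_smul_right, hx, mul_zero]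

variable {T : E →ₗ[ℝ] E} {ev : ι → ℝ}

theorem inner_map_self_eq_sum (hT : ∀ j, T (b j) = ev j • b j) (v : E) :
    ⟪T v, v⟫ = ∑ j, ev j * ⟪b j, v⟫ ^ 2 := by
  have hTv : T v = ∑ j, (ev j * ⟪b j, v⟫) • b j := by
    conv_lhs => rw [← b.sum_repr' v]
    simp only [map_sum, map_smul, hT, smul_smul, mul_comm]
  rw [hTv, sum_inner]
  refine sum_congr rfl fun j _ => ?_
  rw [real_inner_smul_left, real_inner_comm v]
  ring

theorem mul_norm_sq_le_inner_map_self (hT : ∀ j, T (b j) = ev j • b j) {μ : ℝ} {v : E}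
    (hv : v ∈ span ℝ (b '' {j | μ ≤ ev j})) : μ * ‖v‖ ^ 2 ≤ ⟪T v, v⟫ := by
  rw [b.inner_map_self_eq_sum hT, ← b.sum_sq_inner_right, mul_sum]
  refine sum_le_sum fun j _ => ?_
  by_cases hj : μ ≤ ev j
  · exact mul_le_mul_of_nonneg_right hj (sq_nonneg _)
  · simp [b.inner_eq_zero_of_mem_span_image hj hv]

theorem inner_map_self_le_mul_norm_sq (hT : ∀ j, T (b j) = ev j • b j) {ν : ℝ} {v : E}
    (hv : v ∈ span ℝ (b '' {j | ev j ≤ ν})) : ⟪T v, v⟫ ≤ ν * ‖v‖ ^ 2 := by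
  rw [b.inner_map_self_eq_sum hT, ← b.sum_sq_inner_right, mul_sum]
  refine sum_le_sum fun j _ => ?_
  by_cases hj : ev j ≤ ν
  · exact mul_le_mul_of_nonneg_right hj (sq_nonneg _)
  · simp [b.inner_eq_zero_of_mem_span_image hj hv]

end OrthonormalBasis

theorem LinearMap.apply_sort_le_of_isPositive_sub {E : Type*} [NormedAddCommGroup E]
    [InnerProductSpace ℝ E] {p : ℕ} {T S : E →ₗ[ℝ] E} (hST : (S - T).IsPositive)
    (bT bS : OrthonormalBasis (Fin p) ℝ E) {evT evS : Fin p → ℝ}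
    (hT : ∀ j, T (bT j) = evT j • bT j) (hS : ∀ j, S (bS j) = evS j • bS j) (k : Fin p) :
    evT (Tuple.sort evT k) ≤ evS (Tuple.sort evS k) := by
  by_contra! hlt
  have : FiniteDimensional ℝ E := bT.toBasis.finiteDimensional_of_finite
  have hdim : finrank ℝ E <
      finrank ℝ (span ℝ (bT '' ↑({j | evT (Tuple.sort evT k) ≤ evT j} : Finset _))) +
      finrank ℝ (span ℝ (bS '' ↑({j | evS j ≤ evS (Tuple.sort evS k)} : Finset _))) := by
    rw [bT.finrank_span_image, bS.finrank_span_image, finrank_eq_card_basis bT.toBasis,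
      Fintype.card_fin]
    have := Tuple.sub_le_card_filter_apply_sort_le evT k
    have := Tuple.succ_le_card_filter_le_apply_sort evS k
    omega
  obtain ⟨v, ⟨hvT, hvS⟩, hv⟩ := exists_mem_inf_ne_zero_of_finrank_lt hdim
  have hTS : ⟪T v, v⟫ ≤ ⟪S v, v⟫ := by
    have := hST.inner_nonneg_left v
    rwa [sub_apply, inner_sub_left, sub_nonneg] at this
  have hlow := bT.mul_norm_sq_le_inner_map_self hT (by simpa using hvT)
  have hup := bS.inner_map_self_le_mul_norm_sq hS (by simpa using hvS)
  have hv2 : 0 < ‖v‖ ^ 2 := by positivity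
  nlinarith

namespace Matrix

theorem IsHermitian.toEuclideanLin_eigenvectorBasis {n : Type*} [Fintype n] [DecidableEq n]
    {A : Matrix n n ℝ} (hA : A.IsHermitian) (j : n) :
    toEuclideanLin A (hA.eigenvectorBasis j) = hA.eigenvalues j • hA.eigenvectorBasis j := by
  rw [toLpLin_apply, show (hA.eigenvectorBasis j).ofLp = ⇑(hA.eigenvectorBasis j) from rfl,
    hA.mulVec_eigenvectorBasis]
  rfl

theorem IsHermitian.eigenvalues_sort_le_of_posSemidef_sub {p : ℕ}
    {A B : Matrix (Fin p) (Fin p) ℝ} (hA : A.IsHermitian) (hB : B.IsHermitian)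
    (hBA : (B - A).PosSemidef) (k : Fin p) :
    (hA.eigenvalues ∘ Tuple.sort hA.eigenvalues) k ≤
      (hB.eigenvalues ∘ Tuple.sort hB.eigenvalues) k :=
  LinearMap.apply_sort_le_of_isPositive_sub
    (by rwa [← map_sub, isPositive_toEuclideanLin_iff]) hA.eigenvectorBasis hB.eigenvectorBasis
    hA.toEuclideanLin_eigenvectorBasis hB.toEuclideanLin_eigenvectorBasis k

theorem posSemidef_of_transpose_eq_of_isIdempotentElem {n : Type*} [Fintype n]
    {P : Matrix n n ℝ} (hP : Pᵀ = P) (hPP : IsIdempotentElem P) : P.PosSemidef := by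
  have hPPt : P = P * Pᴴ := by rw [conjTranspose_eq_transpose_of_trivial, hP, hPP.eq]
  rw [hPPt]
  exact posSemidef_self_mul_conjTranspose P

end Matrix

/-- Both the sample covariance `S = (1/n)·X·Xᵀ` and the Nyström covariance estimator
`Σ̂ = (1/n)·X·P·Xᵀ` (for a symmetric idempotent `P`) are positive semidefinite, and
each eigenvalue of `Σ̂` (in nonincreasing order, counted with multiplicity) is at most
the corresponding eigenvalue of `S`.  Here `Tuple.sort` arranges the eigenvalues in
nondecreasing order, so `(· ∘ Tuple.sort ·) i.rev` is the `i`-th largest eigenvalue. -/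
theorem nystrom_eigenvalue_shrinkage (p n : ℕ)
    (X : Matrix (Fin p) (Fin n) ℝ) (P : Matrix (Fin n) (Fin n) ℝ)
    (hPsymm : Pᵀ = P) (hPidem : P * P = P) :
    ((n : ℝ)⁻¹ • (X * Xᵀ)).PosSemidef ∧
    ((n : ℝ)⁻¹ • (X * P * Xᵀ)).PosSemidef ∧
    ∀ (hS : ((n : ℝ)⁻¹ • (X * Xᵀ)).IsHermitian)
      (hN : ((n : ℝ)⁻¹ • (X * P * Xᵀ)).IsHermitian) (i : Fin p),
      (hN.eigenvalues ∘ ⇑(Tuple.sort hN.eigenvalues)) i.rev ≤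
        (hS.eigenvalues ∘ ⇑(Tuple.sort hS.eigenvalues)) i.rev := by
  have hcov : ∀ Q : Matrix (Fin n) (Fin n) ℝ, Q.PosSemidef →
      ((n : ℝ)⁻¹ • (X * Q * Xᵀ)).PosSemidef := fun Q hQ => by
    simpa using (hQ.mul_mul_conjTranspose_same X).smul (inv_nonneg.2 n.cast_nonneg)
  have hP : P.PosSemidef := posSemidef_of_transpose_eq_of_isIdempotentElem hPsymm hPidem
  have hQ : (1 - P).PosSemidef := posSemidef_of_transpose_eq_of_isIdempotentElem
    (by rw [transpose_sub, transpose_one, hPsymm]) (IsIdempotentElem.one_sub hPidem)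
  have hdiff : (n : ℝ)⁻¹ • (X * Xᵀ) - (n : ℝ)⁻¹ • (X * P * Xᵀ) =
      (n : ℝ)⁻¹ • (X * (1 - P) * Xᵀ) := by
    rw [Matrix.mul_sub, Matrix.sub_mul, Matrix.mul_one, smul_sub]
  refine ⟨by simpa using hcov 1 PosSemidef.one, hcov P hP, fun hS hN i => ?_⟩
  exact hN.eigenvalues_sort_le_of_posSemidef_sub hS (hdiff ▸ hcov _ hQ) i.rev
end

section
/- Let X be a real p×n matrix partitioned as X = [Y; Z], where Y consists of the first k rows and Z of the remaining p−k rows, and suppose Y admits a thin singular value decomposition Y = U·D·Vᵀ with U a k×k real matrix satisfying Uᵀ·U = I_k, D a k×k diagonal matrix with all diagonal entries nonzero, and V an n×k real matrix with Vᵀ·V = I_k. Define the p×k matrix W blockwise by its first k rows equal to (1/√n)·U·D and its last p−k rows equal to (1/√n)·Z·V. Then W·Wᵀ = (1/n)·X·(V·Vᵀ)·Xᵀ = (1/n)·X·P·Xᵀ, where P = Yᵀ·(Y·Yᵀ)⁻¹·Y; i.e., the Nyström covariance estimator factors as W·Wᵀ, so its nonzero eigenvalues are the squared singular values of W with corresponding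 eigenvectors the left singular vectors of W. -/
open Matrix

lemma nystrom_aux {a b n k : ℕ} (M : Matrix (Fin a) (Fin n) ℝ)
    (N : Matrix (Fin b) (Fin n) ℝ) (V : Matrix (Fin n) (Fin k) ℝ) :
    M * (V * Vᵀ) * Nᵀ = (M * V) * (N * V)ᵀ := by
  rw [transpose_mul]
  simp only [Matrix.mul_assoc]

/-- Given `X = [Y; Z]` with thin SVD `Y = U·D·Vᵀ`, the matrix `W` with first `k` rows
`(1/√n)·U·D` and last `p−k` rows `(1/√n)·Z·V` satisfies
`W·Wᵀ = (1/n)·X·(V·Vᵀ)·Xᵀ = (1/n)·X·P·Xᵀ`, where `P = Yᵀ·(Y·Yᵀ)⁻¹·Y`; i.e. the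
Nyström covariance estimator factors as `W·Wᵀ`. -/
theorem nystrom_factorization (k m n : ℕ) (hn : 0 < n)
    (Y : Matrix (Fin k) (Fin n) ℝ) (Z : Matrix (Fin m) (Fin n) ℝ)
    (U : Matrix (Fin k) (Fin k) ℝ) (d : Fin k → ℝ) (V : Matrix (Fin n) (Fin k) ℝ)
    (hU : Uᵀ * U = 1) (hd : ∀ i, d i ≠ 0) (hV : Vᵀ * V = 1)
    (hY : Y = U * Matrix.diagonal d * Vᵀ) :
    let X := Matrix.fromRows Y Z
    let W := Matrix.fromRows ((Real.sqrt n)⁻¹ • (U * Matrix.diagonal d))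
      ((Real.sqrt n)⁻¹ • (Z * V))
    W * Wᵀ = (n : ℝ)⁻¹ • (X * (V * Vᵀ) * Xᵀ) ∧
    W * Wᵀ = (n : ℝ)⁻¹ • (X * (Yᵀ * (Y * Yᵀ)⁻¹ * Y) * Xᵀ) := by
  intro X W
  have hYV : Y * V = U * Matrix.diagonal d := by
    rw [hY, Matrix.mul_assoc, hV, Matrix.mul_one]
  -- W * Wᵀ in block form
  have hWW : W * Wᵀ = (n : ℝ)⁻¹ •
      fromBlocks ((Y * V) * (Y * V)ᵀ) ((Y * V) * (Z * V)ᵀ)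
        ((Z * V) * (Y * V)ᵀ) ((Z * V) * (Z * V)ᵀ) := by
    have hs : (Real.sqrt n)⁻¹ * (Real.sqrt n)⁻¹ = (n : ℝ)⁻¹ := by
      rw [← mul_inv, Real.mul_self_sqrt (by positivity)]
    show fromRows ((Real.sqrt n)⁻¹ • (U * Matrix.diagonal d)) ((Real.sqrt n)⁻¹ • (Z * V)) *
        (fromRows ((Real.sqrt n)⁻¹ • (U * Matrix.diagonal d)) ((Real.sqrt n)⁻¹ • (Z * V)))ᵀ = _
    rw [transpose_fromRows, fromRows_mul_fromCols, ← hYV]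
    simp only [transpose_smul, Matrix.smul_mul, Matrix.mul_smul, smul_smul, hs,
      Matrix.fromBlocks_smul]
  -- X * (V*Vᵀ) * Xᵀ in block form
  have hX : X * (V * Vᵀ) * Xᵀ =
      fromBlocks ((Y * V) * (Y * V)ᵀ) ((Y * V) * (Z * V)ᵀ)
        ((Z * V) * (Y * V)ᵀ) ((Z * V) * (Z * V)ᵀ) := by
    show fromRows Y Z * (V * Vᵀ) * (fromRows Y Z)ᵀ = _
    rw [transpose_fromRows, fromRows_mul, fromRows_mul_fromCols,
      nystrom_aux Y Y V, nystrom_aux Y Z V, nystrom_aux Z Y V, nystrom_aux Z Z V]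
  have first : W * Wᵀ = (n : ℝ)⁻¹ • (X * (V * Vᵀ) * Xᵀ) := by rw [hWW, hX]
  refine ⟨first, ?_⟩
  -- now show Yᵀ * (Y*Yᵀ)⁻¹ * Y = V * Vᵀ
  have hUU : U * Uᵀ = 1 := mul_eq_one_comm.mp hU
  have hYYT : Y * Yᵀ = U * Matrix.diagonal (fun i => d i * d i) * Uᵀ := by
    rw [hY]
    simp only [transpose_mul, transpose_transpose, Matrix.diagonal_transpose]
    calc U * Matrix.diagonal d * Vᵀ * (V * (Matrix.diagonal d * Uᵀ))
        = U * Matrix.diagonal d * (Vᵀ * V) * (Matrix.diagonal d * Uᵀ) := by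
          simp only [Matrix.mul_assoc]
      _ = U * (Matrix.diagonal d * Matrix.diagonal d) * Uᵀ := by
          rw [hV, Matrix.mul_one]; simp only [Matrix.mul_assoc]
      _ = _ := by rw [Matrix.diagonal_mul_diagonal]
  have hinv : (Y * Yᵀ)⁻¹ = U * Matrix.diagonal (fun i => (d i * d i)⁻¹) * Uᵀ := by
    apply Matrix.inv_eq_right_inv
    rw [hYYT]
    calc U * Matrix.diagonal (fun i => d i * d i) * Uᵀ *
          (U * Matrix.diagonal (fun i => (d i * d i)⁻¹) * Uᵀ)
        = U * Matrix.diagonal (fun i => d i * d i) * (Uᵀ * U) *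
          (Matrix.diagonal (fun i => (d i * d i)⁻¹) * Uᵀ) := by
          simp only [Matrix.mul_assoc]
      _ = U * (Matrix.diagonal (fun i => d i * d i) *
          Matrix.diagonal (fun i => (d i * d i)⁻¹)) * Uᵀ := by
          rw [hU, Matrix.mul_one]; simp only [Matrix.mul_assoc]
      _ = U * Uᵀ := by
          rw [Matrix.diagonal_mul_diagonal]
          have : (fun i => d i * d i * (d i * d i)⁻¹) = fun _ => (1 : ℝ) := by
            funext i
            exact mul_inv_cancel₀ (mul_ne_zero (hd i) (hd i))
          rw [this, Matrix.diagonal_one, Matrix.mul_one]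
      _ = 1 := hUU
  have hP : Yᵀ * (Y * Yᵀ)⁻¹ * Y = V * Vᵀ := by
    rw [hinv, hY]
    simp only [transpose_mul, transpose_transpose, Matrix.diagonal_transpose]
    calc V * (Matrix.diagonal d * Uᵀ) *
          (U * Matrix.diagonal (fun i => (d i * d i)⁻¹) * Uᵀ) *
          (U * Matrix.diagonal d * Vᵀ)
        = V * (Matrix.diagonal d * ((Uᵀ * U) *
          (Matrix.diagonal (fun i => (d i * d i)⁻¹) * ((Uᵀ * U) *
          (Matrix.diagonal d * Vᵀ))))) := by simp only [Matrix.mul_assoc]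
      _ = V * (Matrix.diagonal d *
          (Matrix.diagonal (fun i => (d i * d i)⁻¹) *
          (Matrix.diagonal d * Vᵀ))) := by rw [hU]; simp [Matrix.one_mul]
      _ = V * ((Matrix.diagonal d * Matrix.diagonal (fun i => (d i * d i)⁻¹) *
          Matrix.diagonal d) * Vᵀ) := by simp only [Matrix.mul_assoc]
      _ = V * Vᵀ := by
          rw [Matrix.diagonal_mul_diagonal, Matrix.diagonal_mul_diagonal]
          have : (fun i => d i * (d i * d i)⁻¹ * d i) = fun _ => (1 : ℝ) := by
            funext i
            field_simp
            exact div_self (hd i)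
          rw [this, Matrix.diagonal_one, Matrix.one_mul]
  rw [first, hP]
end
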